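/- Let {(x^k, y^k)} be a sequence generated by the inexact penalty decomposition method, i.e., for every k one has ‖∇_x q_{τ_k}(x^{k+1}, y^{k+1})‖ ≤ δ_k and y^{k+1} ∈ Π_D(x^{k+1}), where δ_k → 0, δ_k ≥ 0, and τ_k → ∞ with τ_k > 0. If (x̄, ȳ) is an accumulation point of the sequence that is feasible for the decomposed problem (G(x̄) ∈ C, x̄ = ȳ ∈ D) and is AM-regular for the decomposed problem, then x̄ is an M-stationary point of problem (P): there exists λ ∈ Y with 0 ∈ ∇f(x̄) + G'(x̄)*λ + N_D^lim(x̄) and λ ∈ N_C(G(x̄)). -/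

import Mathlib

/-!
If `y ∈ Π_D(x)`, the penalty gradient splits as
`∇ₓq_τ(x, y) = ∇f(x) + G'(x)*λ + μ` with `λ = τ (G x - P_C(G x)) ∈ N_C(P_C(G x))` and
`μ = τ (x - y)`, a proximal, hence limiting, normal to `D` at `y`. Thus
`(∇ₓq_τ(x, y) - ∇f(x), 0)` lies in the set `M̃` of the decomposed problem at `(x, y)` perturbed
by `z = (G x - P_C(G x), x - y)`. Along the subsequence these perturbations tend to `0` because
the limit is feasible, and the residuals `∇ₓq_τ` tend to `0`, so AM-regularity puts
`(-∇f(x̄), 0)` into `M̃((x̄, x̄), 0)`, which is M-stationarity of `x̄`.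
-/

open Filter Topology RealInnerProductSpace

noncomputable section

/-- The (set-valued) Euclidean projection of `x` onto `D`:
`Π_D(x) = argmin_{z ∈ D} ‖z - x‖`. -/
def projSet {E : Type*} [NormedAddCommGroup E] (D : Set E) (x : E) : Set E :=
  {z | z ∈ D ∧ ∀ w ∈ D, ‖z - x‖ ≤ ‖w - x‖}

/-- The limiting (Mordukhovich) normal cone to `D` at `x`:
`N_D^lim(x) = limsup_{v → x} cone(v - Π_D(v))`, empty outside `D`. -/
def limNormalCone {E : Type*} [NormedAddCommGroup E] [NormedSpace ℝ E]
    (D : Set E) (x : E) : Set E :=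
  {w | x ∈ D ∧ ∃ v ws : ℕ → E,
    Tendsto v atTop (𝓝 x) ∧ Tendsto ws atTop (𝓝 w) ∧
    ∀ j, ∃ t : ℝ, ∃ p, 0 ≤ t ∧ p ∈ projSet D (v j) ∧ ws j = t • (v j - p)}

/-- The normal cone (of convex analysis) to the convex set `C` at `y`, empty outside `C`. -/
def convNormalCone {E : Type*} [NormedAddCommGroup E] [InnerProductSpace ℝ E]
    (C : Set E) (y : E) : Set E :=
  {l | y ∈ C ∧ ∀ c ∈ C, ⟪l, c - y⟫ ≤ 0}

variable {X Y : Type*} [NormedAddCommGroup X] [InnerProductSpace ℝ X] [FiniteDimensional ℝ X]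
  [NormedAddCommGroup Y] [InnerProductSpace ℝ Y] [FiniteDimensional ℝ Y]

/-- `xb` is an M-stationary (Mordukhovich-stationary) point of problem (P):
minimize `f x` s.t. `G x ∈ C`, `x ∈ D`. -/
def MStationary (f : X → ℝ) (G : X → Y) (C : Set Y) (D : Set X) (xb : X) : Prop :=
  G xb ∈ C ∧ xb ∈ D ∧
    ∃ l : Y, l ∈ convNormalCone C (G xb) ∧
      ∃ w ∈ limNormalCone D xb,
        gradient f xb + ContinuousLinearMap.adjoint (fderiv ℝ G xb) l + w = 0

/-- The partial penalty function
`q_τ(x,y) = f(x) + (τ/2) (‖x-y‖² + dist_C(G(x))²)`, where `dist_C(w) = ‖w - P_C(w)‖`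
and `PC` denotes the Euclidean projection onto `C`. -/
def qpen (f : X → ℝ) (G : X → Y) (PC : Y → Y) (τ : ℝ) (x y : X) : ℝ :=
  f x + τ / 2 * (‖x - y‖ ^ 2 + ‖G x - PC (G x)‖ ^ 2)

/-- The gradient `∇_x q_τ(x, y)` of the penalty function w.r.t. the first block. -/
def gradqx (f : X → ℝ) (G : X → Y) (PC : Y → Y) (τ : ℝ) (x y : X) : X :=
  gradient (fun u => qpen f G PC τ u y) x

/-- The set `M̃(w,z) = G̃'(w)* N_C̃(G̃(w) - z) + N_D̃^lim(w)` of the decomposed problem,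
written componentwise: for `w = (x,y)` and `z = (z₁,z₂)`, its elements are the pairs
`(G'(x)*λ + μ, -μ + w')` with `λ ∈ N_C(G(x) - z₁)`, `μ ∈ X` arbitrary (the normal cone to
`{0}` at `x - y - z₂ = 0`), and `w' ∈ N_D^lim(y)`. -/
def MsetDec (G : X → Y) (C : Set Y) (D : Set X) (x y : X) (z1 : Y) (z2 : X) : Set (X × X) :=
  {v | x - y - z2 = 0 ∧
    ∃ l ∈ convNormalCone C (G x - z1), ∃ μ : X, ∃ w ∈ limNormalCone D y,
      v = (ContinuousLinearMap.adjoint (fderiv ℝ G x) l + μ, -μ + w)}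

/-- `(xb, yb)` is AM-regular for the decomposed problem:
`limsup_{w → (xb,yb), z → 0} M̃(w,z) ⊆ M̃((xb,yb), 0)`. -/
def AMRegularDec (G : X → Y) (C : Set Y) (D : Set X) (xb yb : X) : Prop :=
  ∀ v : X × X,
    (∃ (xs ys : ℕ → X) (z1 : ℕ → Y) (z2 : ℕ → X) (vs : ℕ → X × X),
      (∀ k, ys k ∈ D) ∧ Tendsto xs atTop (𝓝 xb) ∧ Tendsto ys atTop (𝓝 yb) ∧
      Tendsto z1 atTop (𝓝 0) ∧ Tendsto z2 atTop (𝓝 0) ∧ Tendsto vs atTop (𝓝 v) ∧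
      ∀ k, vs k ∈ MsetDec G C D (xs k) (ys k) (z1 k) (z2 k)) →
    v ∈ MsetDec G C D xb yb 0 0

section ConvexProjection

variable {E : Type*} [NormedAddCommGroup E] [InnerProductSpace ℝ E] {C : Set E}

theorem inner_le_zero_of_mem_projSet (hC : Convex ℝ C) {w p : E} (hp : p ∈ projSet C w) :
    ∀ c ∈ C, ⟪w - p, c - p⟫ ≤ 0 := by
  refine (norm_eq_iInf_iff_real_inner_le_zero hC hp.1).1 (le_antisymm ?_ ?_)
  · have : Nonempty C := ⟨⟨p, hp.1⟩⟩
    exact le_ciInf fun c => by simpa only [norm_sub_rev w] using hp.2 c c.2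
  · exact ciInf_le ⟨0, by rintro _ ⟨c, rfl⟩; exact norm_nonneg _⟩ (⟨p, hp.1⟩ : C)

theorem smul_sub_mem_convNormalCone (hC : Convex ℝ C) {w p : E} (hp : p ∈ projSet C w)
    {t : ℝ} (ht : 0 ≤ t) : t • (w - p) ∈ convNormalCone C p := by
  refine ⟨hp.1, fun c hc => ?_⟩
  rw [real_inner_smul_left]
  exact mul_nonpos_of_nonneg_of_nonpos ht (inner_le_zero_of_mem_projSet hC hp c hc)

theorem inner_sub_projSet_nonneg (hC : Convex ℝ C) {u w p q : E} (hp : p ∈ projSet C u)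
    (hq : q ∈ projSet C w) : 0 ≤ ⟪(u - p) - (w - q), u - w⟫ := by
  have hu : 0 ≤ ⟪u - p, p - q⟫ := by
    have := inner_le_zero_of_mem_projSet hC hp q hq.1
    rwa [← neg_sub p q, inner_neg_right, neg_nonpos] at this
  have hw := inner_le_zero_of_mem_projSet hC hq p hp.1
  have hsplit : u - w = ((u - p) - (w - q)) + (p - q) := by abel
  rw [hsplit, inner_add_right, real_inner_self_eq_norm_sq, inner_sub_left]
  nlinarith [sq_nonneg ‖(u - p) - (w - q)‖]

/-- First-order expansion of the squared distance to a convex set. -/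
theorem abs_norm_sub_projSet_sq_sub_le (hC : Convex ℝ C) {u w p q : E}
    (hp : p ∈ projSet C w) (hq : q ∈ projSet C u) :
    |‖u - q‖ ^ 2 - ‖w - p‖ ^ 2 - 2 * ⟪w - p, u - w⟫| ≤ ‖u - w‖ ^ 2 := by
  have hupper : ‖u - q‖ ^ 2 ≤ ‖(w - p) + (u - w)‖ ^ 2 := by
    rw [show (w - p) + (u - w) = u - p by abel, norm_sub_rev u, norm_sub_rev u]
    exact pow_le_pow_left₀ (norm_nonneg _) (hq.2 p hp.1) 2
  have hlower : ‖w - p‖ ^ 2 ≤ ‖(u - q) - (u - w)‖ ^ 2 := by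
    rw [show (u - q) - (u - w) = w - q by abel, norm_sub_rev w, norm_sub_rev w]
    exact pow_le_pow_left₀ (norm_nonneg _) (hp.2 q hq.1) 2
  have hmono := inner_sub_projSet_nonneg hC hq hp
  rw [norm_add_sq_real] at hupper
  rw [norm_sub_sq_real (u - q)] at hlower
  rw [inner_sub_left] at hmono
  rw [abs_le]
  constructor <;> linarith [sq_nonneg ‖u - w‖]

theorem hasFDerivAt_norm_sub_proj_sq (hC : Convex ℝ C) {P : E → E}
    (hP : ∀ u, P u ∈ projSet C u) (w : E) :
    HasFDerivAt (fun u => ‖u - P u‖ ^ 2) ((2 : ℝ) • innerSL ℝ (w - P w)) w := by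
  refine HasFDerivAt.of_isLittleO (Asymptotics.IsBigO.trans_isLittleO ?_
    (Asymptotics.isLittleO_pow_sub_sub w one_lt_two))
  refine Asymptotics.IsBigO.of_bound 1 (Eventually.of_forall fun u => ?_)
  simpa only [Real.norm_eq_abs, abs_pow, abs_norm, one_mul, smul_apply,
    innerSL_apply_apply, smul_eq_mul] using
    abs_norm_sub_projSet_sq_sub_le hC (hP w) (hP u)

end ConvexProjection

theorem mem_projSet_lineMap {E : Type*} [NormedAddCommGroup E] [NormedSpace ℝ E] {D : Set E}
    {x y : E} (hy : y ∈ projSet D x) {s : ℝ} (hs₀ : 0 ≤ s) (hs₁ : s ≤ 1) :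
    y ∈ projSet D (AffineMap.lineMap y x s) := by
  refine ⟨hy.1, fun z hz => ?_⟩
  rw [AffineMap.lineMap_apply_module']
  set v := s • (x - y) + y
  have hyv : ‖y - v‖ = s * ‖x - y‖ := by
    rw [sub_add_cancel_right, norm_neg, norm_smul, Real.norm_of_nonneg hs₀]
  have hxv : ‖x - v‖ = (1 - s) * ‖x - y‖ := by
    rw [show x - v = (1 - s) • (x - y) by module, norm_smul,
      Real.norm_of_nonneg (sub_nonneg.2 hs₁)]
  have htri : ‖z - x‖ ≤ ‖z - v‖ + ‖x - v‖ := by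
    simpa only [sub_sub_sub_cancel_right] using norm_sub_le (z - v) (x - v)
  have hzx := hy.2 z hz
  rw [norm_sub_rev y x] at hzx
  linarith

/-- Proximal normals are limiting normals. -/
theorem smul_sub_mem_limNormalCone {E : Type*} [NormedAddCommGroup E] [NormedSpace ℝ E]
    {D : Set E} {x y : E} (hy : y ∈ projSet D x) {t : ℝ} (ht : 0 ≤ t) :
    t • (x - y) ∈ limNormalCone D y := by
  set s : ℕ → ℝ := fun j => ((j : ℝ) + 1)⁻¹
  have hs : Tendsto s atTop (𝓝 0) := tendsto_one_div_add_atTop_nhds_zero_nat.congr (by simp [s])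
  refine ⟨hy.1, fun j => AffineMap.lineMap y x (s j), fun _ => t • (x - y), ?_,
    tendsto_const_nhds, fun j => ⟨((j : ℝ) + 1) * t, y, by positivity, ?_, ?_⟩⟩
  · have h := (AffineMap.lineMap_continuous (p := y) (q := x)).tendsto 0 |>.comp hs
    rwa [AffineMap.lineMap_apply_zero] at h
  · exact mem_projSet_lineMap hy (by positivity)
      (inv_le_one_of_one_le₀ (by linarith [j.cast_nonneg' (α := ℝ)]))
  · change t • (x - y) = (((j : ℝ) + 1) * t) • (AffineMap.lineMap y x (s j) -ᵥ y)
    rw [AffineMap.lineMap_vsub_left, vsub_eq_sub, smul_smul, mul_right_comm,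
      mul_inv_cancel₀ (by positivity), one_mul]

section Penalty

variable {f : X → ℝ} {G : X → Y} {C : Set Y} {D : Set X} {PC : Y → Y}

theorem hasGradientAt_qpen (hC : Convex ℝ C) (hPC : ∀ w, PC w ∈ projSet C w) {x : X}
    (hf : DifferentiableAt ℝ f x) (hG : DifferentiableAt ℝ G x) (τ : ℝ) (y : X) :
    HasGradientAt (fun u => qpen f G PC τ u y)
      (gradient f x + τ • (x - y) +
        τ • ContinuousLinearMap.adjoint (fderiv ℝ G x) (G x - PC (G x))) x := by
  have hdist := (hasFDerivAt_norm_sub_proj_sq hC hPC (G x)).comp x hG.hasFDerivAt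
  rw [hasGradientAt_iff_hasFDerivAt]
  refine (hf.hasGradientAt.hasFDerivAt.add
    ((((hasFDerivAt_id x).sub_const y).norm_sq.add hdist).const_mul (τ / 2))).congr_fderiv ?_
  ext v
  simp only [toDual_gradient, id_eq, map_sub, ContinuousLinearMap.comp_id,
    ContinuousLinearMap.smul_comp, ContinuousLinearMap.sub_comp, smul_add, add_apply, smul_apply,
    sub_apply, coe_innerSL_apply, nsmul_eq_mul, Nat.cast_ofNat, smul_eq_mul,
    ContinuousLinearMap.comp_apply, map_add, map_smul, InnerProductSpace.toDual_apply_apply,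
    ContinuousLinearMap.adjoint_inner_left]
  ring

theorem gradqx_eq (hC : Convex ℝ C) (hPC : ∀ w, PC w ∈ projSet C w) {x : X}
    (hf : DifferentiableAt ℝ f x) (hG : DifferentiableAt ℝ G x) (τ : ℝ) (y : X) :
    gradqx f G PC τ x y = gradient f x + τ • (x - y) +
      τ • ContinuousLinearMap.adjoint (fderiv ℝ G x) (G x - PC (G x)) :=
  (hasGradientAt_qpen hC hPC hf hG τ y).gradient

theorem gradqx_sub_gradient_mem_MsetDec (hC : Convex ℝ C) (hPC : ∀ w, PC w ∈ projSet C w)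
    {x y : X} (hf : DifferentiableAt ℝ f x) (hG : DifferentiableAt ℝ G x) {τ : ℝ} (hτ : 0 ≤ τ)
    (hy : y ∈ projSet D x) :
    (gradqx f G PC τ x y - gradient f x, 0) ∈
      MsetDec G C D x y (G x - PC (G x)) (x - y) := by
  refine ⟨sub_self _, τ • (G x - PC (G x)), ?_, τ • (x - y), τ • (x - y),
    smul_sub_mem_limNormalCone hy hτ, ?_⟩
  · rw [sub_sub_cancel]
    exact smul_sub_mem_convNormalCone hC (hPC (G x)) hτ
  · rw [gradqx_eq hC hPC hf hG, map_smul, neg_add_cancel]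
    congr 1
    abel

theorem MStationary_of_neg_gradient_mem_MsetDec {xb : X}
    (h : (-gradient f xb, 0) ∈ MsetDec G C D xb xb 0 0) : MStationary f G C D xb := by
  obtain ⟨-, l, hl, μ, w, hw, heq⟩ := h
  rw [sub_zero] at hl
  have hfst : -gradient f xb = ContinuousLinearMap.adjoint (fderiv ℝ G xb) l + μ :=
    congrArg Prod.fst heq
  have hwμ : w = μ := (neg_add_eq_zero.1 (congrArg Prod.snd heq).symm).symm
  refine ⟨hl.1, hw.1, l, hl, w, hw, ?_⟩
  rw [hwμ, add_assoc, ← hfst, add_neg_cancel]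

theorem MStationary_of_tendsto_gradqx (hf : ContDiff ℝ 1 f) (hG : ContDiff ℝ 1 G)
    (hC : Convex ℝ C) (hPC : ∀ w, PC w ∈ projSet C w) {τ : ℕ → ℝ} (hτ : ∀ j, 0 ≤ τ j)
    {xs ys : ℕ → X} {xb : X} (hproj : ∀ j, ys j ∈ projSet D (xs j))
    (hres : Tendsto (fun j => gradqx f G PC (τ j) (xs j) (ys j)) atTop (𝓝 0))
    (hxs : Tendsto xs atTop (𝓝 xb)) (hys : Tendsto ys atTop (𝓝 xb)) (hGxb : G xb ∈ C)
    (hreg : AMRegularDec G C D xb xb) : MStationary f G C D xb := by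
  have hGxs : Tendsto (fun j => G (xs j)) atTop (𝓝 (G xb)) := (hG.continuous.tendsto xb).comp hxs
  have hgrad : Tendsto (fun j => gradient f (xs j)) atTop (𝓝 (gradient f xb)) :=
    ((InnerProductSpace.toDual ℝ X).symm.continuous.comp
      (hf.continuous_fderiv one_ne_zero)).tendsto xb |>.comp hxs
  -- `dist_C (G x) ≤ ‖G x - G xb‖` since `G xb ∈ C`
  have hz₁ : Tendsto (fun j => G (xs j) - PC (G (xs j))) atTop (𝓝 0) := by
    refine squeeze_zero_norm (fun j => ?_) (tendsto_iff_norm_sub_tendsto_zero.1 hGxs)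
    rw [norm_sub_rev, norm_sub_rev (G (xs j))]
    exact (hPC _).2 _ hGxb
  have hz₂ : Tendsto (fun j => xs j - ys j) atTop (𝓝 0) := by
    simpa only [sub_self] using hxs.sub hys
  have hv : Tendsto (fun j => (gradqx f G PC (τ j) (xs j) (ys j) - gradient f (xs j), (0 : X)))
      atTop (𝓝 (-gradient f xb, 0)) := by
    simpa only [zero_sub] using (hres.sub hgrad).prodMk_nhds tendsto_const_nhds
  exact MStationary_of_neg_gradient_mem_MsetDec <| hreg _ ⟨xs, ys, _, _, _,
    fun j => (hproj j).1, hxs, hys, hz₁, hz₂, hv, fun j =>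
      gradqx_sub_gradient_mem_MsetDec hC hPC (hf.differentiable one_ne_zero _)
        (hG.differentiable one_ne_zero _) (hτ j) (hproj j)⟩

end Penalty

theorem pd_feasible_regular_accumulation_point_is_M_stationary_general
    (f : X → ℝ) (G : X → Y) (C : Set Y) (D : Set X)
    (hf : ContDiff ℝ 1 f) (hG : ContDiff ℝ 1 G)
    (hCconv : Convex ℝ C)
    (PC : Y → Y) (hPC : ∀ w, PC w ∈ C ∧ ∀ c ∈ C, ‖PC w - w‖ ≤ ‖c - w‖)
    (δ τs : ℕ → ℝ) (hδ0 : Tendsto δ atTop (𝓝 0))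
    (hτpos : ∀ k, 0 < τs k)
    (x y : ℕ → X)
    (halg : ∀ k, ‖gradqx f G PC (τs k) (x (k + 1)) (y (k + 1))‖ ≤ δ k ∧
      y (k + 1) ∈ projSet D (x (k + 1)))
    (xb yb : X) (φ : ℕ → ℕ) (hφ : StrictMono φ)
    (hxb : Tendsto (fun j => x (φ j)) atTop (𝓝 xb))
    (hyb : Tendsto (fun j => y (φ j)) atTop (𝓝 yb))
    (hfeas : G xb ∈ C ∧ xb = yb ∧ yb ∈ D)
    (hreg : AMRegularDec G C D xb yb) :
    MStationary f G C D xb := by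
  obtain ⟨hGxb, rfl, -⟩ := hfeas
  -- `halg k` speaks about the iterate `k + 1`; reindex the subsequence by `ψ j + 1 = φ (j + 1)`
  set ψ : ℕ → ℕ := fun j => φ (j + 1) - 1
  have hψ : ∀ j, ψ j + 1 = φ (j + 1) := fun j =>
    Nat.sub_add_cancel (hφ.le_apply.trans' (Nat.le_add_left 1 j))
  have hψ_top : Tendsto ψ atTop atTop :=
    tendsto_atTop_mono (fun j => Nat.le_sub_one_of_lt hφ.le_apply) tendsto_id
  have hshift : ∀ {a : X} (z : ℕ → X), Tendsto (fun j => z (φ j)) atTop (𝓝 a) →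
      Tendsto (fun j => z (ψ j + 1)) atTop (𝓝 a) := fun z hz => by
    simp only [hψ]; exact hz.comp (tendsto_add_atTop_nat 1)
  exact MStationary_of_tendsto_gradqx hf hG hCconv hPC (fun j => (hτpos (ψ j)).le)
    (fun j => (halg (ψ j)).2) (squeeze_zero_norm (fun j => (halg (ψ j)).1) (hδ0.comp hψ_top))
    (hshift x hxb) (hshift y hyb) hGxb hreg

/-- a feasible, AM-regular accumulation point of the inexact penalty
decomposition method yields an M-stationary point of problem (P). -/
theorem pd_feasible_regular_accumulation_point_is_M_stationary
    (f : X → ℝ) (G : X → Y) (C : Set Y) (D : Set X)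
    (hf : ContDiff ℝ 1 f) (hG : ContDiff ℝ 1 G)
    (hCne : C.Nonempty) (hCcl : IsClosed C) (hCconv : Convex ℝ C)
    (hDne : D.Nonempty) (hDcl : IsClosed D)
    (PC : Y → Y) (hPC : ∀ w, PC w ∈ C ∧ ∀ c ∈ C, ‖PC w - w‖ ≤ ‖c - w‖)
    (δ τs : ℕ → ℝ) (hδnn : ∀ k, 0 ≤ δ k) (hδ0 : Tendsto δ atTop (𝓝 0))
    (hτpos : ∀ k, 0 < τs k) (hτ : Tendsto τs atTop atTop)
    (x y : ℕ → X)
    (halg : ∀ k, ‖gradqx f G PC (τs k) (x (k + 1)) (y (k + 1))‖ ≤ δ k ∧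
      y (k + 1) ∈ projSet D (x (k + 1)))
    (xb yb : X) (φ : ℕ → ℕ) (hφ : StrictMono φ)
    (hxb : Tendsto (fun j => x (φ j)) atTop (𝓝 xb))
    (hyb : Tendsto (fun j => y (φ j)) atTop (𝓝 yb))
    (hfeas : G xb ∈ C ∧ xb = yb ∧ yb ∈ D)
    (hreg : AMRegularDec G C D xb yb) :
    MStationary f G C D xb :=
  pd_feasible_regular_accumulation_point_is_M_stationary_general f G C D hf hG hCconv PC hPC δ τs
    hδ0 hτpos x y halg xb yb φ hφ hxb hyb hfeas hreg
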